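/- arXiv:2405.08931 — 6 statements merged into one kernel-verified Lean document; each statement's English description precedes it below -/
import Mathlib

section
/- In a connected unit disk graph UDG(P), for any two distinct vertices u and v, the weighted graph distance and the hop-distance satisfy d_G(u,v) <= hd(u,v) and hd(u,v) < 2 * d_G(u,v) + 1. In particular, hop-distance 2-approximates the weighted shortest path distance. -/
open scoped BigOperators ENNReal

noncomputable section

abbrev Pt : Type := EuclideanSpace ℝ (Fin 2)

def UDG (P : Finset Pt) : SimpleGraph {p : Pt // p ∈ P} where
  Adj u v := u ≠ v ∧ dist (u : Pt) (v : Pt) ≤ 1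
  symm := by
    constructor
    intro u v h
    exact ⟨h.1.symm, by rw [dist_comm]; exact h.2⟩
  loopless := by
    constructor
    intro u h
    exact h.1 rfl

def walkWeight {P : Finset Pt} {u v : {p : Pt // p ∈ P}}
    (w : (UDG P).Walk u v) : ℝ :=
  (w.darts.map (fun d => dist (d.toProd.1 : Pt) (d.toProd.2 : Pt))).sum

def dG {P : Finset Pt} (u v : {p : Pt // p ∈ P}) : ℝ :=
  sInf {x : ℝ | ∃ w : (UDG P).Walk u v, walkWeight w = x}

namespace HopAux

open SimpleGraph

variable {P : Finset Pt}

local instance : DecidableEq {p : Pt // p ∈ P} := Classical.decEq _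

lemma adj_dist_pos {u v : {p : Pt // p ∈ P}} (h : (UDG P).Adj u v) :
    0 < dist (u : Pt) (v : Pt) :=
  dist_pos.2 (fun he => h.1 (Subtype.ext he))

@[simp] lemma walkWeight_nil {u : {p : Pt // p ∈ P}} :
    walkWeight (SimpleGraph.Walk.nil : (UDG P).Walk u u) = 0 := by
  simp [walkWeight]

@[simp] lemma walkWeight_cons {u v w : {p : Pt // p ∈ P}} (h : (UDG P).Adj u v)
    (p : (UDG P).Walk v w) :
    walkWeight (SimpleGraph.Walk.cons h p) = dist (u : Pt) (v : Pt) + walkWeight p := by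
  simp [walkWeight]

@[simp] lemma walkWeight_append {u v w : {p : Pt // p ∈ P}} (p : (UDG P).Walk u v)
    (q : (UDG P).Walk v w) :
    walkWeight (p.append q) = walkWeight p + walkWeight q := by
  simp [walkWeight, SimpleGraph.Walk.darts_append]

@[simp] lemma walkWeight_copy {u v u' v' : {p : Pt // p ∈ P}} (p : (UDG P).Walk u v)
    (hu : u = u') (hv : v = v') :
    walkWeight (p.copy hu hv) = walkWeight p := by
  simp [walkWeight]

lemma walkWeight_nonneg {u v : {p : Pt // p ∈ P}} (p : (UDG P).Walk u v) :
    0 ≤ walkWeight p := by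
  induction p with
  | nil => simp
  | cons h p ih => simp only [walkWeight_cons]; positivity

lemma walkWeight_le_length {u v : {p : Pt // p ∈ P}} (p : (UDG P).Walk u v) :
    walkWeight p ≤ (p.length : ℝ) := by
  induction p with
  | nil => simp
  | cons h p ih =>
    rw [walkWeight_cons, SimpleGraph.Walk.length_cons]
    push_cast
    linarith [h.2]

lemma walkWeight_dropUntil_le {u v x : {p : Pt // p ∈ P}} (p : (UDG P).Walk u v)
    (h : x ∈ p.support) : walkWeight (p.dropUntil x h) ≤ walkWeight p := by
  conv_rhs => rw [← p.take_spec h]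
  rw [walkWeight_append]
  linarith [walkWeight_nonneg (p.takeUntil x h)]

lemma walkWeight_bypass_le {u v : {p : Pt // p ∈ P}} (p : (UDG P).Walk u v) :
    walkWeight p.bypass ≤ walkWeight p := by
  induction p with
  | nil => exact le_refl _
  | cons h p ih =>
    simp only [SimpleGraph.Walk.bypass]
    split_ifs with hs
    · refine (walkWeight_dropUntil_le _ hs).trans (ih.trans ?_)
      rw [walkWeight_cons]
      have := (adj_dist_pos h).le
      linarith
    · rw [walkWeight_cons, walkWeight_cons]
      linarith

/-- Optimality: minimum weight, and minimum length among minimum-weight walks. -/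
def Opt {u v : {p : Pt // p ∈ P}} (p : (UDG P).Walk u v) : Prop :=
  ∀ q : (UDG P).Walk u v,
    walkWeight p ≤ walkWeight q ∧ (walkWeight q ≤ walkWeight p → p.length ≤ q.length)

lemma Opt.tail {u v w : {p : Pt // p ∈ P}} {h : (UDG P).Adj u v} {p : (UDG P).Walk v w}
    (hopt : Opt (SimpleGraph.Walk.cons h p)) : Opt p := by
  intro q
  have H := hopt (SimpleGraph.Walk.cons h q)
  rw [walkWeight_cons, walkWeight_cons, SimpleGraph.Walk.length_cons,
    SimpleGraph.Walk.length_cons] at H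
  refine ⟨by linarith [H.1], fun hle => ?_⟩
  have := H.2 (by linarith)
  omega

lemma key_shortcut {u a b v : {p : Pt // p ∈ P}} (h1 : (UDG P).Adj u a)
    (h2 : (UDG P).Adj a b) (q : (UDG P).Walk b v)
    (hopt : Opt (SimpleGraph.Walk.cons h1 (SimpleGraph.Walk.cons h2 q))) :
    1 < dist (u : Pt) (a : Pt) + dist (a : Pt) (b : Pt) := by
  by_contra hle
  push_neg at hle
  have htri : dist (u : Pt) (b : Pt) ≤ dist (u : Pt) (a : Pt) + dist (a : Pt) (b : Pt) :=
    dist_triangle _ _ _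
  by_cases hub : u = b
  · have H := hopt ((q.copy hub.symm rfl))
    rw [walkWeight_copy, walkWeight_cons, walkWeight_cons] at H
    have := adj_dist_pos h1
    have := adj_dist_pos h2
    linarith [H.1]
  · have hadj : (UDG P).Adj u b := ⟨hub, htri.trans hle⟩
    have H := hopt (SimpleGraph.Walk.cons hadj q)
    rw [walkWeight_cons, walkWeight_cons, walkWeight_cons] at H
    have hlen := H.2 (by linarith)
    simp only [SimpleGraph.Walk.length_cons] at hlen
    omega

lemma count_lemma : ∀ (n : ℕ) {u v : {p : Pt // p ∈ P}} (p : (UDG P).Walk u v),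
    p.length ≤ n → Opt p →
    ((u = v → (p.length : ℝ) ≤ 2 * walkWeight p) ∧
     (u ≠ v → (p.length : ℝ) < 2 * walkWeight p + 1)) := by
  intro n
  induction n with
  | zero =>
    intro u v p hlen hopt
    have h0 : p.length = 0 := Nat.le_zero.mp hlen
    have heq : u = v := SimpleGraph.Walk.eq_of_length_eq_zero h0
    constructor
    · intro _
      rw [h0]
      simpa using walkWeight_nonneg p
    · intro hne; exact absurd heq hne
  | succ n ih =>
    intro u v p hlen hopt
    constructor
    · -- the u = v case: optimality forces length 0
      intro heq
      have H := hopt ((SimpleGraph.Walk.nil : (UDG P).Walk v v).copy heq.symm rfl)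
      rw [walkWeight_copy, walkWeight_nil] at H
      have hw0 : walkWeight p = 0 := le_antisymm H.1 (walkWeight_nonneg p)
      have hl0 : p.length ≤ 0 := by simpa using H.2 (by rw [hw0])
      rw [Nat.le_zero.mp hl0, hw0]
      norm_num
    · intro hne
      cases p with
      | nil => exact absurd rfl hne
      | @cons _ a _ h1 p1 =>
        cases p1 with
        | nil =>
          rw [walkWeight_cons, walkWeight_nil]
          have := adj_dist_pos h1
          simp only [SimpleGraph.Walk.length_cons, SimpleGraph.Walk.length_nil]
          push_cast
          linarith
        | @cons _ b _ h2 q =>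
          have hoptq : Opt q := (hopt.tail).tail
          have hkey := key_shortcut h1 h2 q hopt
          have hqlen : q.length ≤ n := by
            simp only [SimpleGraph.Walk.length_cons] at hlen
            omega
          have IH := ih q hqlen hoptq
          have hwq : 0 ≤ walkWeight q := walkWeight_nonneg q
          rw [walkWeight_cons, walkWeight_cons]
          simp only [SimpleGraph.Walk.length_cons]
          push_cast
          by_cases hbv : b = v
          · have := IH.1 hbv
            linarith
          · have := IH.2 hbv
            linarith

lemma exists_opt (hconn : (UDG P).Connected) (u v : {p : Pt // p ∈ P}) :
    ∃ p : (UDG P).Walk u v, Opt p := by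
  classical
  obtain ⟨w0⟩ := hconn u v
  -- minimize weight over paths
  obtain ⟨p₁, -, hp₁⟩ := Finset.exists_min_image (Finset.univ : Finset ((UDG P).Path u v))
    (fun p => walkWeight p.val) ⟨w0.toPath, Finset.mem_univ _⟩
  -- minimize length among minimum-weight paths
  obtain ⟨p₀, hp₀mem, hp₀⟩ := Finset.exists_min_image
    (Finset.univ.filter (fun p : (UDG P).Path u v => walkWeight p.val = walkWeight p₁.val))
    (fun p => p.val.length) ⟨p₁, by simp⟩
  have hp₀w : walkWeight p₀.val = walkWeight p₁.val := by
    simpa using hp₀mem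
  refine ⟨p₀.val, fun q => ?_⟩
  have hq' : walkWeight (q.bypass) ≤ walkWeight q := walkWeight_bypass_le q
  have hq'len : q.bypass.length ≤ q.length := SimpleGraph.Walk.length_bypass_le q
  have hmin : walkWeight p₀.val ≤ walkWeight q.bypass := by
    rw [hp₀w]
    exact hp₁ ⟨q.bypass, q.bypass_isPath⟩ (Finset.mem_univ _)
  refine ⟨hmin.trans hq', fun hle => ?_⟩
  have heq : walkWeight q.bypass = walkWeight p₁.val := by
    rw [← hp₀w]
    exact le_antisymm (by linarith) hmin
  have := hp₀ ⟨q.bypass, q.bypass_isPath⟩ (by simp [heq])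
  exact le_trans this hq'len

end HopAux

/-- Hop-distance 2-approximates the weighted shortest-path distance in a connected
unit disk graph: `dG u v ≤ hd u v` and `hd u v < 2 * dG u v + 1`. -/
theorem hop_dist_two_approximates_weighted_dist_UDG
    (P : Finset Pt) (hconn : (UDG P).Connected)
    (u v : {p : Pt // p ∈ P}) (hne : u ≠ v) :
    dG u v ≤ ((UDG P).dist u v : ℝ) ∧
    ((UDG P).dist u v : ℝ) < 2 * dG u v + 1 := by
  classical
  obtain ⟨p₀, hopt⟩ := HopAux.exists_opt hconn u v
  have hbdd : BddBelow {x : ℝ | ∃ w : (UDG P).Walk u v, walkWeight w = x} :=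
    ⟨0, fun x ⟨w, hw⟩ => hw ▸ HopAux.walkWeight_nonneg w⟩
  have hdG : dG u v = walkWeight p₀ := by
    apply le_antisymm
    · exact csInf_le hbdd ⟨p₀, rfl⟩
    · exact le_csInf ⟨walkWeight p₀, p₀, rfl⟩ (fun x ⟨w, hw⟩ => hw ▸ (hopt w).1)
  constructor
  · obtain ⟨pd, hpd⟩ := hconn.exists_walk_length_eq_dist u v
    calc dG u v ≤ walkWeight pd := csInf_le hbdd ⟨pd, rfl⟩
      _ ≤ (pd.length : ℝ) := HopAux.walkWeight_le_length pd
      _ = ((UDG P).dist u v : ℝ) := by exact_mod_cast hpd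
  · have hcount := (HopAux.count_lemma p₀.length p₀ le_rfl hopt).2 hne
    have hdle : (UDG P).dist u v ≤ p₀.length := SimpleGraph.dist_le p₀
    rw [hdG]
    calc ((UDG P).dist u v : ℝ) ≤ (p₀.length : ℝ) := by exact_mod_cast hdle
      _ < 2 * walkWeight p₀ + 1 := hcount
end
end

section
/- Let (M, d) be a metric space, C a finite nonempty set of clients in M, F a finite nonempty set of facilities in M, and f : F -> R_{>=0} opening costs. For a nonempty subset D of F define cost(D) = sum over i in D of f(i) + sum over j in C of min over i in D of d(j, i). Let D* be a nonempty subset of F minimizing cost over all nonempty subsets of F. Then for every facility p in F and every nonempty subset S of C, setting avgcost(p) = (f(p) + sum over j in S of d(j, p)) / |S|, there exists g in D* with d(p, g) <= 2 * avgcost(p). -/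
/-!
Compare `D*` with `D* ∪ {p}`: by optimality, opening `p` saves at most `f p` in connection
cost, and the saving on the clients of `S` alone is at least `∑_{j ∈ S} (d(j, D*) - d(j, p))`.
Hence `∑_{j ∈ S} d(j, D*) ≤ f p + ∑_{j ∈ S} d(j, p)`, so on average over `S` the quantity
`d(j, D*) + d(j, p)` is at most `2 · avgcost(p)`. For a client `j` achieving the average and its
nearest open facility `g`, the triangle inequality gives `d(p, g) ≤ d(p, j) + d(j, g)`.
-/

open Finset
open scoped BigOperators

section FacilityLocation

variable {α β : Type*}

noncomputable def facilityCost (f : β → ℝ) (c : α → β → ℝ) (C : Finset α) (D : Finset β)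
    (hD : D.Nonempty) : ℝ :=
  ∑ i ∈ D, f i + ∑ j ∈ C, D.inf' hD (c j)

theorem Finset.sum_insert_le_add [DecidableEq β] {s : Finset β} {a : β} {f : β → ℝ}
    (ha : 0 ≤ f a) :
    ∑ i ∈ insert a s, f i ≤ f a + ∑ i ∈ s, f i := by
  by_cases has : a ∈ s
  · rw [insert_eq_of_mem has]
    exact le_add_of_nonneg_left ha
  · rw [sum_insert has]

theorem Finset.sum_sub_sum_le_sum_sub_sum_min {S C : Finset α} (hSC : S ⊆ C) (u v : α → ℝ) :
    ∑ j ∈ S, u j - ∑ j ∈ S, v j ≤ ∑ j ∈ C, u j - ∑ j ∈ C, min (v j) (u j) := by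
  rw [← sum_sub_distrib, ← sum_sub_distrib]
  calc ∑ j ∈ S, (u j - v j) ≤ ∑ j ∈ S, (u j - min (v j) (u j)) :=
        sum_le_sum fun j _ => by linarith [min_le_left (v j) (u j)]
    _ ≤ ∑ j ∈ C, (u j - min (v j) (u j)) :=
        sum_le_sum_of_subset_of_nonneg hSC fun j _ _ => by linarith [min_le_right (v j) (u j)]

theorem sum_inf'_le_of_facilityCost_le_insert [DecidableEq β] {f : β → ℝ} {c : α → β → ℝ}
    {C S : Finset α} {D : Finset β} {hD : D.Nonempty} {p : β} (hfp : 0 ≤ f p) (hSC : S ⊆ C)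
    (hopt : facilityCost f c C D hD ≤ facilityCost f c C (insert p D) (insert_nonempty p D)) :
    ∑ j ∈ S, D.inf' hD (c j) ≤ f p + ∑ j ∈ S, c j p := by
  have hconn : ∀ j,
      (insert p D).inf' (insert_nonempty p D) (c j) = min (c j p) (D.inf' hD (c j)) :=
    fun j => inf'_insert _ _
  simp only [facilityCost, hconn] at hopt
  have hsaving := sum_sub_sum_le_sum_sub_sum_min hSC (fun j => D.inf' hD (c j)) (fun j => c j p)
  linarith [sum_insert_le_add (s := D) hfp]

end FacilityLocation

theorem exists_mem_dist_le_expect {M : Type*} [PseudoMetricSpace M] {D S : Finset M}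
    (hD : D.Nonempty) (hS : S.Nonempty) (p : M) :
    ∃ g ∈ D, dist p g ≤ 𝔼 j ∈ S, (D.inf' hD (dist j) + dist j p) := by
  obtain ⟨j, -, hj⟩ := exists_le_of_expect_le hS
    (le_refl (𝔼 j ∈ S, (D.inf' hD (dist j) + dist j p)))
  obtain ⟨g, hgD, hg⟩ := exists_mem_eq_inf' hD (dist j)
  refine ⟨g, hgD, ?_⟩
  calc dist p g ≤ dist p j + dist j g := dist_triangle p j g
    _ = D.inf' hD (dist j) + dist j p := by rw [← hg, dist_comm, add_comm]
    _ ≤ _ := hj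

theorem exists_opt_facility_close_to_avgcost_general
    {M : Type*} [MetricSpace M]
    (C F : Finset M)
    (f : M → ℝ) (hf : ∀ i ∈ F, 0 ≤ f i)
    (Dstar : Finset M) (hDstar : Dstar.Nonempty) (hDstarF : Dstar ⊆ F)
    (hopt : ∀ D : Finset M, D ⊆ F → ∀ hD : D.Nonempty,
      (∑ i ∈ Dstar, f i) + ∑ j ∈ C, Dstar.inf' hDstar (fun i => dist j i)
        ≤ (∑ i ∈ D, f i) + ∑ j ∈ C, D.inf' hD (fun i => dist j i))
    (p : M) (hp : p ∈ F) (S : Finset M) (hS : S.Nonempty) (hSC : S ⊆ C) :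
    ∃ g ∈ Dstar,
      dist p g ≤ 2 * ((f p + ∑ j ∈ S, dist j p) / S.card) := by
  classical
  have hfp := hf p hp
  have hconn : ∑ j ∈ S, Dstar.inf' hDstar (dist j) ≤ f p + ∑ j ∈ S, dist j p :=
    sum_inf'_le_of_facilityCost_le_insert hfp hSC
      (hopt _ (insert_subset hp hDstarF) (insert_nonempty p Dstar))
  obtain ⟨g, hg, hpg⟩ := exists_mem_dist_le_expect hDstar hS p
  refine ⟨g, hg, hpg.trans ?_⟩
  rw [expect_eq_sum_div_card, sum_add_distrib, ← mul_div_assoc]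
  gcongr
  linarith

/-- For an optimal facility location solution `D*`, every facility `p` and every
nonempty client subset `S` admit `g ∈ D*` with `d(p,g) ≤ 2 · avgcost(p)`, where
`avgcost(p) = (f(p) + Σ_{j ∈ S} d(j,p)) / |S|`. -/
theorem exists_opt_facility_close_to_avgcost
    {M : Type*} [MetricSpace M]
    (C F : Finset M) (hC : C.Nonempty) (hF : F.Nonempty)
    (f : M → ℝ) (hf : ∀ i ∈ F, 0 ≤ f i)
    (Dstar : Finset M) (hDstar : Dstar.Nonempty) (hDstarF : Dstar ⊆ F)
    (hopt : ∀ D : Finset M, D ⊆ F → ∀ hD : D.Nonempty,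
      (∑ i ∈ Dstar, f i) + ∑ j ∈ C, Dstar.inf' hDstar (fun i => dist j i)
        ≤ (∑ i ∈ D, f i) + ∑ j ∈ C, D.inf' hD (fun i => dist j i))
    (p : M) (hp : p ∈ F) (S : Finset M) (hS : S.Nonempty) (hSC : S ⊆ C) :
    ∃ g ∈ Dstar,
      dist p g ≤ 2 * ((f p + ∑ j ∈ S, dist j p) / S.card) :=
  exists_opt_facility_close_to_avgcost_general C F f hf Dstar hDstar hDstarF hopt p hp S hS hSC
end

section
/- Let G = UDG(P) be a unit disk graph whose vertex set is partitioned into three sets S, G1, G2 such that for every edge ab of G with a in G1 and b in G2 there exists c in S with d_G(a,c) <= 4 and d_G(b,c) <= 4. Then for every u in G1 and v in G2 lying in the same connected component of G, there exists c in S with d_G(u,c) + d_G(c,v) <= d_G(u,v) + 8. -/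
open scoped BigOperators ENNReal

noncomputable section

section Aux
open SimpleGraph

variable {P : Finset Pt}

lemma walkWeight_nil {u : {p : Pt // p ∈ P}} :
    walkWeight (Walk.nil : (UDG P).Walk u u) = 0 := by simp [walkWeight]

lemma walkWeight_cons {u x v : {p : Pt // p ∈ P}} (h : (UDG P).Adj u x)
    (p : (UDG P).Walk x v) :
    walkWeight (Walk.cons h p) = dist (u : Pt) (x : Pt) + walkWeight p := by
  simp [walkWeight]

lemma walkWeight_nonneg {u v : {p : Pt // p ∈ P}} (w : (UDG P).Walk u v) :
    0 ≤ walkWeight w := by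
  apply List.sum_nonneg
  intro x hx
  simp only [List.mem_map] at hx
  obtain ⟨d, _, rfl⟩ := hx
  exact dist_nonneg

lemma walkWeight_append {u x v : {p : Pt // p ∈ P}} (w1 : (UDG P).Walk u x)
    (w2 : (UDG P).Walk x v) :
    walkWeight (w1.append w2) = walkWeight w1 + walkWeight w2 := by
  simp [walkWeight, Walk.darts_append]

lemma walkWeight_reverse {u v : {p : Pt // p ∈ P}} (w : (UDG P).Walk u v) :
    walkWeight w.reverse = walkWeight w := by
  simp only [walkWeight, Walk.darts_reverse, List.map_reverse, List.sum_reverse, List.map_map]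
  rw [List.map_congr_left]
  intro d _
  simp only [Function.comp_apply, Dart.symm]
  exact dist_comm _ _

end Aux

section Aux2
open SimpleGraph

variable {P : Finset Pt}

lemma dG_bddBelow (u v : {p : Pt // p ∈ P}) :
    BddBelow {x : ℝ | ∃ w : (UDG P).Walk u v, walkWeight w = x} := by
  refine ⟨0, ?_⟩
  rintro x ⟨w, rfl⟩
  exact walkWeight_nonneg w

lemma dG_nonneg (u v : {p : Pt // p ∈ P}) : 0 ≤ dG u v := by
  apply Real.sInf_nonneg
  rintro x ⟨w, rfl⟩
  exact walkWeight_nonneg w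

lemma dG_le_walkWeight {u v : {p : Pt // p ∈ P}} (w : (UDG P).Walk u v) :
    dG u v ≤ walkWeight w :=
  csInf_le (dG_bddBelow u v) ⟨w, rfl⟩

lemma dG_comm (u v : {p : Pt // p ∈ P}) : dG u v = dG v u := by
  unfold dG
  congr 1
  ext x
  constructor
  · rintro ⟨w, rfl⟩
    exact ⟨w.reverse, walkWeight_reverse w⟩
  · rintro ⟨w, rfl⟩
    exact ⟨w.reverse, walkWeight_reverse w⟩

lemma dG_eq_zero_of_not_reachable {u v : {p : Pt // p ∈ P}}
    (h : ¬ (UDG P).Reachable u v) : dG u v = 0 := by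
  have : {x : ℝ | ∃ w : (UDG P).Walk u v, walkWeight w = x} = ∅ := by
    ext x
    simp only [Set.mem_setOf_eq, Set.mem_empty_iff_false, iff_false]
    rintro ⟨w, rfl⟩
    exact h ⟨w⟩
  rw [dG, this, Real.sInf_empty]

lemma dG_triangle {u x c : {p : Pt // p ∈ P}} (hux : (UDG P).Reachable u x) :
    dG u c ≤ dG u x + dG x c := by
  by_cases hxc : (UDG P).Reachable x c
  · obtain ⟨w1⟩ := hux
    obtain ⟨w2⟩ := hxc
    have hA : {y : ℝ | ∃ w : (UDG P).Walk u x, walkWeight w = y}.Nonempty := ⟨_, w1, rfl⟩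
    have hB : {y : ℝ | ∃ w : (UDG P).Walk x c, walkWeight w = y}.Nonempty := ⟨_, w2, rfl⟩
    rw [dG, dG]
    rw [← sub_le_iff_le_add']
    apply le_csInf hB
    rintro b ⟨wb, rfl⟩
    rw [sub_le_iff_le_add']
    rw [← sub_le_iff_le_add]
    apply le_csInf hA
    rintro a ⟨wa, rfl⟩
    rw [sub_le_iff_le_add]
    calc dG u c ≤ walkWeight (wa.append wb) := dG_le_walkWeight _
      _ = walkWeight wa + walkWeight wb := walkWeight_append _ _
  · have huc : ¬ (UDG P).Reachable u c := fun h => hxc (hux.symm.trans h)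
    rw [dG_eq_zero_of_not_reachable huc]
    have := dG_nonneg u x
    have := dG_nonneg x c
    linarith

end Aux2

section Key
open SimpleGraph

lemma key_lemma {P : Finset Pt} (S G1 G2 : Set {p : Pt // p ∈ P})
    (hcover : S ∪ G1 ∪ G2 = Set.univ)
    (hG12 : Disjoint G1 G2)
    (hsep : ∀ a ∈ G1, ∀ b ∈ G2, (UDG P).Adj a b →
      ∃ c ∈ S, dG a c ≤ 4 ∧ dG b c ≤ 4)
    (u v : {p : Pt // p ∈ P}) (w : (UDG P).Walk u v) :
    v ∈ G2 → u ∈ G1 → ∃ c ∈ S, dG u c + dG c v ≤ walkWeight w + 8 := by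
  induction w with
  | nil =>
    intro hv hu
    exact absurd hv (Set.disjoint_left.mp hG12 hu)
  | @cons a b v' h p ih =>
    intro hv hu
    rw [walkWeight_cons]
    have hbmem : b ∈ S ∪ G1 ∪ G2 := by rw [hcover]; exact Set.mem_univ b
    have hdnn : (0:ℝ) ≤ dist (a : Pt) (b : Pt) := dist_nonneg
    rcases hbmem with (hb | hb) | hb
    · -- b ∈ S
      refine ⟨b, hb, ?_⟩
      have h1 : dG a b ≤ dist (a : Pt) (b : Pt) := by
        have := dG_le_walkWeight (Walk.cons h Walk.nil)
        rwa [walkWeight_cons, walkWeight_nil, add_zero] at this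
      have h2 : dG b v' ≤ walkWeight p := dG_le_walkWeight p
      linarith
    · -- b ∈ G1
      obtain ⟨c, hcS, hle⟩ := ih hv hb
      have htri : dG a c ≤ dG a b + dG b c := dG_triangle h.reachable
      have h1 : dG a b ≤ dist (a : Pt) (b : Pt) := by
        have := dG_le_walkWeight (Walk.cons h Walk.nil)
        rwa [walkWeight_cons, walkWeight_nil, add_zero] at this
      refine ⟨c, hcS, by linarith⟩
    · -- b ∈ G2
      obtain ⟨c, hcS, h4a, h4b⟩ := hsep a hu b hb h
      refine ⟨c, hcS, ?_⟩
      by_cases hr : (UDG P).Reachable c b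
      · have htri : dG c v' ≤ dG c b + dG b v' := dG_triangle hr
        have hcomm : dG c b = dG b c := dG_comm c b
        have h2 : dG b v' ≤ walkWeight p := dG_le_walkWeight p
        linarith
      · have hcv : ¬ (UDG P).Reachable c v' := fun hcv => hr (hcv.trans (Reachable.symm ⟨p⟩))
        have hac : ¬ (UDG P).Reachable a c := fun hac => hr ((h.symm.reachable.trans hac).symm)
        rw [dG_eq_zero_of_not_reachable hcv]
        rw [dG_eq_zero_of_not_reachable hac]
        have := walkWeight_nonneg p
        linarith

end Key

/-- If a vertex partition `S, G1, G2` of a unit disk graph is such that every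
`G1`–`G2` edge has both endpoints within weighted distance 4 of some vertex of `S`,
then any `u ∈ G1` and `v ∈ G2` in a common component can be routed through some
`c ∈ S` with total detour at most 8. -/
theorem route_through_partly_separator_UDG
    (P : Finset Pt) (S G1 G2 : Set {p : Pt // p ∈ P})
    (hcover : S ∪ G1 ∪ G2 = Set.univ)
    (hSG1 : Disjoint S G1) (hSG2 : Disjoint S G2) (hG12 : Disjoint G1 G2)
    (hsep : ∀ a ∈ G1, ∀ b ∈ G2, (UDG P).Adj a b →
      ∃ c ∈ S, dG a c ≤ 4 ∧ dG b c ≤ 4)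
    (u : {p : Pt // p ∈ P}) (hu : u ∈ G1)
    (v : {p : Pt // p ∈ P}) (hv : v ∈ G2)
    (hreach : (UDG P).Reachable u v) :
    ∃ c ∈ S, dG u c + dG c v ≤ dG u v + 8 := by
  obtain ⟨w0⟩ := hreach
  obtain ⟨c1, hc1S, _⟩ := key_lemma S G1 G2 hcover hG12 hsep u v w0 hv hu
  have hSfin : S.Finite := Set.toFinite S
  set T : Finset {p : Pt // p ∈ P} := hSfin.toFinset with hT
  have hc1T : c1 ∈ T := hSfin.mem_toFinset.mpr hc1S
  obtain ⟨c0, hc0T, hmin⟩ :=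
    T.exists_min_image (fun c => dG u c + dG c v) ⟨c1, hc1T⟩
  refine ⟨c0, hSfin.mem_toFinset.mp hc0T, ?_⟩
  have hkey : dG u c0 + dG c0 v - 8 ≤ dG u v := by
    show dG u c0 + dG c0 v - 8 ≤ sInf {x : ℝ | ∃ w : (UDG P).Walk u v, walkWeight w = x}
    exact le_csInf ⟨walkWeight w0, w0, rfl⟩ (by
      rintro b ⟨w, rfl⟩
      obtain ⟨c, hcS, hle⟩ := key_lemma S G1 G2 hcover hG12 hsep u v w hv hu
      have := hmin c (hSfin.mem_toFinset.mpr hcS)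
      linarith)
  linarith
end
end

section
/- Let a, b be real numbers and let r be chosen uniformly at random from the interval [0, 1/2). Assign a real number x to the grid cell with index floor(2(x + r)). Then the probability that a and b are assigned to different cells is at most 2|a - b|. -/
/-!
Scaling the grid to cells of length `T`, the set of offsets separating `a ≤ b` is `T`-periodic, so
its measure in the window `(0, T]` equals its measure in any other window of length `T`. In the
window `(-a - T, -a]` the point `a` lies in the cell with index `-1` or `0`, so a grid line between
`a` and `b` must be the one at index `0`, which forces `r ∈ [-b, -a]`, an interval of length
`b - a`.
-/

open scoped ENNReal

open MeasureTheory Set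

def separatingOffsets (T a b : ℝ) : Set ℝ := {r | ⌊(a + r) / T⌋ ≠ ⌊(b + r) / T⌋}

theorem measurableSet_separatingOffsets (T a b : ℝ) : MeasurableSet (separatingOffsets T a b) :=
  measurableSet_setOfPred.2 <| by fun_prop

theorem separatingOffsets_comm (T a b : ℝ) : separatingOffsets T a b = separatingOffsets T b a := by
  ext r; exact ne_comm

theorem separatingOffsets_periodic {T : ℝ} (hT : T ≠ 0) (a b : ℝ) :
    Function.Periodic (· ∈ separatingOffsets T a b) T := by
  intro r
  have shift (x : ℝ) : ⌊(x + (r + T)) / T⌋ = ⌊(x + r) / T⌋ + 1 := by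
    rw [← add_assoc, add_div, div_self hT, Int.floor_add_one]
  simp only [separatingOffsets, mem_ofPred_eq, shift, ne_eq, add_left_inj]

theorem Function.Periodic.volume_inter_Ioc_eq {A : Set ℝ} {T : ℝ} (hT : 0 < T)
    (hA : Function.Periodic (· ∈ A) T) (hAm : MeasurableSet A) (s t : ℝ) :
    volume (A ∩ Ioc s (s + T)) = volume (A ∩ Ioc t (t + T)) := by
  refine (isAddFundamentalDomain_Ioc hT s).measure_set_eq (isAddFundamentalDomain_Ioc hT t) hAm ?_
  rintro ⟨g, n, rfl⟩
  ext x
  simpa [add_comm] using hA.zsmul n x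

theorem separatingOffsets_inter_Ioc_subset {T a b : ℝ} (hT : 0 < T) (hab : a ≤ b) :
    separatingOffsets T a b ∩ Ioc (-a - T) (-a) ⊆ Icc (-b) (-a) := by
  rintro r ⟨hne, hr_lo, hr_hi⟩
  refine ⟨?_, hr_hi⟩
  have hlt : ⌊(a + r) / T⌋ < ⌊(b + r) / T⌋ :=
    (Int.floor_le_floor (by gcongr)).lt_of_ne hne
  have ha_cell : -1 ≤ ⌊(a + r) / T⌋ := by
    rw [Int.le_floor, Int.cast_neg, Int.cast_one, le_div_iff₀ hT]
    linarith
  have hb_cell : 0 ≤ (b + r) / T := Int.floor_nonneg.1 (by omega)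
  rw [le_div_iff₀ hT, zero_mul] at hb_cell
  linarith

theorem volume_separatingOffsets_inter_Ioc_le {T : ℝ} (hT : 0 < T) (a b : ℝ) :
    volume (separatingOffsets T a b ∩ Ioc 0 T) ≤ ENNReal.ofReal |a - b| := by
  wlog hab : a ≤ b generalizing a b
  · rw [separatingOffsets_comm, abs_sub_comm]
    exact this b a (le_of_not_ge hab)
  have hper := separatingOffsets_periodic hT.ne' a b
  calc volume (separatingOffsets T a b ∩ Ioc 0 T)
      = volume (separatingOffsets T a b ∩ Ioc (-a - T) (-a)) := by
        simpa using hper.volume_inter_Ioc_eq hT (measurableSet_separatingOffsets T a b) 0 (-a - T)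
    _ ≤ volume (Icc (-b) (-a)) := measure_mono (separatingOffsets_inter_Ioc_subset hT hab)
    _ = ENNReal.ofReal |a - b| := by
        rw [Real.volume_Icc, abs_sub_comm, abs_of_nonneg (by linarith)]
        ring_nf

/-- For a uniformly random offset `r ∈ [0, 1/2)`, the probability that two reals
`a` and `b` land in different cells of the shifted grid of cell size `1/2` is at
most `2 |a - b|`. -/
theorem prob_separated_by_random_grid_line
    (a b : ℝ) :
    ((2 : ℝ≥0∞) • (volume.restrict (Set.Ico (0 : ℝ) (1 / 2))))
        {r : ℝ | ⌊2 * (a + r)⌋ ≠ ⌊2 * (b + r)⌋}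
      ≤ ENNReal.ofReal (2 * |a - b|) := by
  have hgrid : {r : ℝ | ⌊2 * (a + r)⌋ ≠ ⌊2 * (b + r)⌋} = separatingOffsets (1 / 2) a b := by
    simp only [separatingOffsets, one_div, div_inv_eq_mul, mul_comm]
  rw [hgrid, Measure.smul_apply, smul_eq_mul, ENNReal.ofReal_mul zero_le_two, ENNReal.ofReal_ofNat,
    Measure.restrict_congr_set Ico_ae_eq_Ioc,
    Measure.restrict_apply (measurableSet_separatingOffsets _ a b)]
  gcongr
  exact volume_separatingOffsets_inter_Ioc_le one_half_pos a b
end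

section
/- Let p = (p1, p2) and q = (q1, q2) be points in the plane and let r = (r1, r2) be chosen uniformly at random from [0, 1/2) x [0, 1/2). Assign a point x = (x1, x2) to the grid cell (floor(2(x1 + r1)), floor(2(x2 + r2))). Then the probability that p and q are assigned to different grid cells is at most 2(|p1 - q1| + |p2 - q2|). -/
/-!
Work coordinatewise and take a union bound. In one coordinate, scaling reduces to cells of
size `1` and offsets `r ∈ [0, 1)`. For `a ≤ b` the points are separated exactly when an integer
`m` satisfies `a + r < m ≤ b + r`, i.e. `r - m ∈ [-b, -a)`. The integer translates of
`[-b, -a)` cut down to `[0, 1)` reassemble `[-b, -a)`, so the separating offsets have measure at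
most `b - a`.
-/

open scoped ENNReal

open MeasureTheory Set

theorem tsum_volume_preimage_add_intCast_inter_Ico {s : Set ℝ} (hs : MeasurableSet s) :
    ∑' n : ℤ, volume ((· + (n : ℝ)) ⁻¹' s ∩ Ico 0 1) = volume s := by
  have hpiece (n : ℤ) :
      (· + (n : ℝ)) ⁻¹' s ∩ Ico 0 1 = (· + (n : ℝ)) ⁻¹' (s ∩ Ico (n : ℝ) (n + 1)) := by
    ext x; simp [add_comm (n : ℝ)]
  simp_rw [hpiece, measure_preimage_add_right]
  have hdisj : Pairwise (Function.onFun Disjoint fun n : ℤ => s ∩ Ico (n : ℝ) (n + 1)) :=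
    fun m n hmn => (pairwise_disjoint_Ico_intCast ℝ hmn).mono inter_subset_right inter_subset_right
  rw [← measure_iUnion hdisj (fun n => hs.inter measurableSet_Ico),
    ← inter_iUnion, iUnion_Ico_intCast, inter_univ]

theorem volume_sep_floor_add_ne_le (a b : ℝ) :
    volume {r ∈ Ico (0 : ℝ) 1 | ⌊a + r⌋ ≠ ⌊b + r⌋} ≤ ENNReal.ofReal |a - b| := by
  wlog hab : a ≤ b generalizing a b
  · simpa only [ne_comm, abs_sub_comm] using this b a (le_of_not_ge hab)
  have hcover : {r ∈ Ico (0 : ℝ) 1 | ⌊a + r⌋ ≠ ⌊b + r⌋} ⊆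
      ⋃ n : ℤ, (· + (n : ℝ)) ⁻¹' Ico (-b) (-a) ∩ Ico 0 1 := by
    rintro r ⟨hr, hne⟩
    have hlt : ⌊a + r⌋ < ⌊b + r⌋ := (Int.floor_le_floor (by linarith)).lt_of_ne hne
    refine mem_iUnion.2 ⟨-⌊b + r⌋, ⟨?_, ?_⟩, hr⟩
    · have := Int.floor_le (b + r); push_cast; linarith
    · have := Int.floor_lt.1 hlt; push_cast; linarith
  calc volume {r ∈ Ico (0 : ℝ) 1 | ⌊a + r⌋ ≠ ⌊b + r⌋}
      ≤ ∑' n : ℤ, volume ((· + (n : ℝ)) ⁻¹' Ico (-b) (-a) ∩ Ico 0 1) :=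
        (measure_mono hcover).trans (measure_iUnion_le _)
    _ = ENNReal.ofReal |a - b| := by
        rw [tsum_volume_preimage_add_intCast_inter_Ico measurableSet_Ico, Real.volume_Ico,
          abs_sub_comm, abs_of_nonneg (sub_nonneg.2 hab)]
        ring_nf

theorem restrict_Ico_floor_mul_add_ne_le {c : ℝ} (hc : 0 < c) (a b : ℝ) :
    volume.restrict (Ico 0 (1 / c)) {r | ⌊c * (a + r)⌋ ≠ ⌊c * (b + r)⌋} ≤
      ENNReal.ofReal |a - b| := by
  rw [Measure.restrict_apply' measurableSet_Ico, ofPred_inter_eq_sep]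
  have hscale : {r ∈ Ico (0 : ℝ) (1 / c) | ⌊c * (a + r)⌋ ≠ ⌊c * (b + r)⌋} =
      (c * ·) ⁻¹' {s ∈ Ico (0 : ℝ) 1 | ⌊c * a + s⌋ ≠ ⌊c * b + s⌋} := by
    ext r
    simp only [mem_ofPred_eq, mem_preimage, mem_Ico, mul_add, mul_nonneg_iff_of_pos_left hc,
      lt_div_iff₀' hc]
  calc volume {r ∈ Ico (0 : ℝ) (1 / c) | ⌊c * (a + r)⌋ ≠ ⌊c * (b + r)⌋}
      = ENNReal.ofReal |c⁻¹| *
          volume {s ∈ Ico (0 : ℝ) 1 | ⌊c * a + s⌋ ≠ ⌊c * b + s⌋} := by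
        rw [hscale, Real.volume_preimage_mul_left hc.ne']
    _ ≤ ENNReal.ofReal |c⁻¹| * ENNReal.ofReal |c * a - c * b| := by
        gcongr; exact volume_sep_floor_add_ne_le _ _
    _ = ENNReal.ofReal |a - b| := by
        rw [← ENNReal.ofReal_mul (abs_nonneg _), ← abs_mul, ← mul_sub,
          inv_mul_cancel_left₀ hc.ne']

theorem measure_prod_setOf_fst_mem_or_snd_mem_le {α β : Type*} [MeasurableSpace α]
    [MeasurableSpace β] (μ : Measure α) (ν : Measure β) [SFinite ν] (A : Set α) (B : Set β) :
    μ.prod ν {x | x.1 ∈ A ∨ x.2 ∈ B} ≤ μ A * ν univ + μ univ * ν B := by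
  calc μ.prod ν {x | x.1 ∈ A ∨ x.2 ∈ B} = μ.prod ν (A ×ˢ univ ∪ univ ×ˢ B) := by
        congr 1; ext x; simp
    _ ≤ μ A * ν univ + μ univ * ν B := by
        rw [← Measure.prod_prod, ← Measure.prod_prod]; exact measure_union_le _ _

/-- For a uniformly random offset `r ∈ [0,1/2) × [0,1/2)`, the probability that two
points `p, q` of the plane land in different cells of the shifted grid of cell size
`1/2` is at most `2 (|p₁ - q₁| + |p₂ - q₂|)`. -/
theorem prob_separated_by_random_grid
    (p q : ℝ × ℝ) :
    ((4 : ℝ≥0∞) •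
        (volume.restrict ((Set.Ico (0 : ℝ) (1 / 2)) ×ˢ (Set.Ico (0 : ℝ) (1 / 2)))))
        {r : ℝ × ℝ | ⌊2 * (p.1 + r.1)⌋ ≠ ⌊2 * (q.1 + r.1)⌋ ∨
          ⌊2 * (p.2 + r.2)⌋ ≠ ⌊2 * (q.2 + r.2)⌋}
      ≤ ENNReal.ofReal (2 * (|p.1 - q.1| + |p.2 - q.2|)) := by
  set μ := volume.restrict (Ico (0 : ℝ) (1 / 2))
  have hμ : μ univ = ENNReal.ofReal (1 / 2) := by
    rw [Measure.restrict_apply_univ, Real.volume_Ico, sub_zero]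
  rw [Measure.smul_apply, smul_eq_mul, Measure.volume_eq_prod, ← Measure.prod_restrict]
  calc 4 * μ.prod μ {r : ℝ × ℝ | ⌊2 * (p.1 + r.1)⌋ ≠ ⌊2 * (q.1 + r.1)⌋ ∨
          ⌊2 * (p.2 + r.2)⌋ ≠ ⌊2 * (q.2 + r.2)⌋}
      ≤ 4 * (μ {x | ⌊2 * (p.1 + x)⌋ ≠ ⌊2 * (q.1 + x)⌋} * μ univ +
          μ univ * μ {y | ⌊2 * (p.2 + y)⌋ ≠ ⌊2 * (q.2 + y)⌋}) := by
        gcongr; exact measure_prod_setOf_fst_mem_or_snd_mem_le _ _ _ _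
    _ ≤ 4 * (ENNReal.ofReal |p.1 - q.1| * ENNReal.ofReal (1 / 2) +
          ENNReal.ofReal (1 / 2) * ENNReal.ofReal |p.2 - q.2|) := by
        rw [hμ]; gcongr <;> exact restrict_Ico_floor_mul_add_ne_le two_pos _ _
    _ = ENNReal.ofReal (2 * (|p.1 - q.1| + |p.2 - q.2|)) := by
        rw [← ENNReal.ofReal_mul (abs_nonneg _), ← ENNReal.ofReal_mul (by norm_num),
          ← ENNReal.ofReal_add (by positivity) (by positivity), ← ENNReal.ofReal_ofNat 4,
          ← ENNReal.ofReal_mul (by norm_num)]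
        ring_nf
end

section
/- Let G = UDG(P) be a connected unit disk graph, s a vertex, and k >= 1 an integer. If u and v are vertices whose hop-distances from s satisfy |hd(s,u) - hd(s,v)| >= k, then the weighted graph distance satisfies d_G(u,v) > (k - 1)/2. -/
open scoped BigOperators ENNReal

noncomputable section

namespace UDGAux

variable {P : Finset Pt}

instance : DecidableEq {p : Pt // p ∈ P} := Classical.decEq _

instance : DecidableRel (UDG P).Adj := Classical.decRel _

lemma walkWeight_nil {u : {p : Pt // p ∈ P}} :
    walkWeight (SimpleGraph.Walk.nil : (UDG P).Walk u u) = 0 := by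
  simp [walkWeight]

lemma walkWeight_cons {u v w : {p : Pt // p ∈ P}} (h : (UDG P).Adj u v)
    (p : (UDG P).Walk v w) :
    walkWeight (SimpleGraph.Walk.cons h p) = dist (u : Pt) (v : Pt) + walkWeight p := by
  simp [walkWeight]

lemma walkWeight_nonneg {u v : {p : Pt // p ∈ P}} (w : (UDG P).Walk u v) :
    0 ≤ walkWeight w := by
  induction w with
  | nil => simp [walkWeight_nil]
  | cons h p ih =>
    rw [walkWeight_cons]
    exact add_nonneg dist_nonneg ih

lemma dist_le_walkWeight {u v : {p : Pt // p ∈ P}} (w : (UDG P).Walk u v) :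
    dist (u : Pt) (v : Pt) ≤ walkWeight w := by
  induction w with
  | nil => simp [walkWeight_nil]
  | @cons a b c h p ih =>
    rw [walkWeight_cons]
    calc dist (a : Pt) (c : Pt) ≤ dist (a : Pt) (b : Pt) + dist (b : Pt) (c : Pt) :=
          dist_triangle _ _ _
      _ ≤ dist (a : Pt) (b : Pt) + walkWeight p := by linarith

lemma walkWeight_append {u v w : {p : Pt // p ∈ P}} (p : (UDG P).Walk u v)
    (q : (UDG P).Walk v w) :
    walkWeight (p.append q) = walkWeight p + walkWeight q := by
  simp [walkWeight, SimpleGraph.Walk.darts_append]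

lemma walkWeight_dropUntil_le {u v x : {p : Pt // p ∈ P}} (p : (UDG P).Walk u v)
    (h : x ∈ p.support) :
    walkWeight (p.dropUntil x h) ≤ walkWeight p := by
  conv_rhs => rw [← p.take_spec h]
  rw [walkWeight_append]
  have := walkWeight_nonneg (p.takeUntil x h)
  linarith

lemma walkWeight_bypass_le {u v : {p : Pt // p ∈ P}} (p : (UDG P).Walk u v) :
    walkWeight p.bypass ≤ walkWeight p := by
  induction p with
  | nil => simp [SimpleGraph.Walk.bypass]
  | @cons a b c h p ih =>
    simp only [SimpleGraph.Walk.bypass]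
    split_ifs with hs
    · calc walkWeight (p.bypass.dropUntil a hs) ≤ walkWeight p.bypass :=
            walkWeight_dropUntil_le _ _
        _ ≤ walkWeight p := ih
        _ ≤ walkWeight (SimpleGraph.Walk.cons h p) := by
            rw [walkWeight_cons]; have := dist_nonneg (x := (a : Pt)) (y := (b : Pt)); linarith
    · rw [walkWeight_cons, walkWeight_cons]
      linarith


lemma split_lemma (a0 : Pt) {a c : {p : Pt // p ∈ P}} (w : (UDG P).Walk a c) :
    dist a0 (a : Pt) ≤ 1 → 1 < dist a0 (c : Pt) →
    ∃ (x y : {p : Pt // p ∈ P}) (w2 : (UDG P).Walk y c),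
      dist a0 (x : Pt) ≤ 1 ∧ 1 < dist a0 (y : Pt) ∧ (UDG P).Adj x y ∧
      w2.length < w.length ∧
      walkWeight w2 + (dist a0 (y : Pt) - dist a0 (a : Pt)) ≤ walkWeight w := by
  induction w with
  | nil => intro ha hc; exact absurd hc (not_lt.mpr ha)
  | @cons a b c h p ih =>
    intro ha hc
    by_cases hb : dist a0 (b : Pt) ≤ 1
    · obtain ⟨x, y, w2, h1, h2, h3, h4, h5⟩ := ih hb hc
      refine ⟨x, y, w2, h1, h2, h3, ?_, ?_⟩
      · simp only [SimpleGraph.Walk.length_cons]; omega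
      · rw [walkWeight_cons]
        have tri : dist a0 (b : Pt) ≤ dist a0 (a : Pt) + dist (a : Pt) (b : Pt) :=
          dist_triangle _ _ _
        linarith
    · push_neg at hb
      refine ⟨a, b, p, ha, hb, h, by simp, ?_⟩
      rw [walkWeight_cons]
      have tri : dist a0 (b : Pt) ≤ dist a0 (a : Pt) + dist (a : Pt) (b : Pt) :=
        dist_triangle _ _ _
      linarith

lemma hopdist_lt (hconn : (UDG P).Connected) :
    ∀ (n : ℕ) {a c : {p : Pt // p ∈ P}} (w : (UDG P).Walk a c), w.length ≤ n →
      ((UDG P).dist a c : ℝ) < 2 * walkWeight w + 1 := by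
  intro n
  induction n with
  | zero =>
    intro a c w hw
    have hlen : w.length = 0 := Nat.le_zero.mp hw
    have hac : a = c := w.eq_of_length_eq_zero hlen
    subst hac
    have := walkWeight_nonneg w
    simp only [SimpleGraph.dist_self, Nat.cast_zero]
    linarith
  | succ m ih =>
    intro a c w hw
    by_cases hac : dist (a : Pt) (c : Pt) ≤ 1
    · by_cases heq : a = c
      · subst heq
        have := walkWeight_nonneg w
        simp only [SimpleGraph.dist_self, Nat.cast_zero]
        linarith
      · have hadj : (UDG P).Adj a c := ⟨heq, hac⟩
        have h1 : (UDG P).dist a c ≤ 1 := by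
          simpa using SimpleGraph.dist_le hadj.toWalk
        have hpos : 0 < dist (a : Pt) (c : Pt) :=
          dist_pos.mpr (fun hh => heq (Subtype.ext hh))
        have hWge := dist_le_walkWeight w
        have hcast : ((UDG P).dist a c : ℝ) ≤ 1 := by exact_mod_cast h1
        linarith
    · push_neg at hac
      obtain ⟨x, y, w2, h1, h2, h3, h4, h5⟩ :=
        split_lemma ((a : Pt)) w (by simp) hac
      have hw2 : w2.length ≤ m := by
        have := w.length
        omega
      have ihy := ih w2 hw2
      have hax : (UDG P).dist a x ≤ 1 := by
        by_cases hxa : a = x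
        · subst hxa; simp [SimpleGraph.dist_self]
        · have hadj : (UDG P).Adj a x := ⟨hxa, h1⟩
          simpa using SimpleGraph.dist_le hadj.toWalk
      have hxy : (UDG P).dist x y ≤ 1 := by
        simpa using SimpleGraph.dist_le h3.toWalk
      have tri1 : (UDG P).dist a c ≤ (UDG P).dist a x + (UDG P).dist x c :=
        hconn.dist_triangle
      have tri2 : (UDG P).dist x c ≤ (UDG P).dist x y + (UDG P).dist y c :=
        hconn.dist_triangle
      have hd1 : ((UDG P).dist a c : ℝ) ≤ 2 + ((UDG P).dist y c : ℝ) := by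
        have : (UDG P).dist a c ≤ 2 + (UDG P).dist y c := by omega
        exact_mod_cast this
      have hW : walkWeight w2 + 1 < walkWeight w := by
        simp only [dist_self, sub_zero] at h5
        linarith
      linarith

end UDGAux

open UDGAux in
/-- If the BFS (hop) levels of two vertices from a source differ by at least `k ≥ 1`,
then their weighted graph distance exceeds `(k - 1) / 2`. -/
theorem hop_level_gap_implies_dist_gt_UDG
    (P : Finset Pt) (hconn : (UDG P).Connected)
    (s u v : {p : Pt // p ∈ P}) (k : ℕ) (hk : 1 ≤ k)
    (hgap : (k : ℤ) ≤ |((UDG P).dist s u : ℤ) - ((UDG P).dist s v : ℤ)|) :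
    ((k : ℝ) - 1) / 2 < dG u v := by
  classical
  -- hop distance lower bound from the level gap
  have tri1 : (UDG P).dist s u ≤ (UDG P).dist s v + (UDG P).dist v u :=
    hconn.dist_triangle
  have tri2 : (UDG P).dist s v ≤ (UDG P).dist s u + (UDG P).dist u v :=
    hconn.dist_triangle
  have hcomm : (UDG P).dist v u = (UDG P).dist u v := SimpleGraph.dist_comm
  have hknat : k ≤ (UDG P).dist u v := by
    have h1 : ((UDG P).dist s u : ℤ) - ((UDG P).dist s v : ℤ) ≤ ((UDG P).dist u v : ℤ) := by
      have : (UDG P).dist s u ≤ (UDG P).dist s v + (UDG P).dist u v := hcomm ▸ tri1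
      omega
    have h2 : ((UDG P).dist s v : ℤ) - ((UDG P).dist s u : ℤ) ≤ ((UDG P).dist u v : ℤ) := by
      omega
    have habs : |((UDG P).dist s u : ℤ) - ((UDG P).dist s v : ℤ)| ≤ ((UDG P).dist u v : ℤ) :=
      abs_le.mpr ⟨by linarith, h1⟩
    exact_mod_cast le_trans hgap habs
  -- every walk from u to v has weight > (k-1)/2
  have key : ∀ w : (UDG P).Walk u v, ((k : ℝ) - 1) / 2 < walkWeight w := by
    intro w
    have hlt := hopdist_lt hconn w.length w le_rfl
    have hk2 : (k : ℝ) ≤ ((UDG P).dist u v : ℝ) := by exact_mod_cast hknat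
    linarith
  -- the set of path weights is finite; its minimum bounds all walk weights from below
  obtain ⟨w0⟩ := hconn.preconnected u v
  let F : Finset ℝ := Finset.univ.image (fun p : (UDG P).Path u v => walkWeight p.val)
  have hne : F.Nonempty :=
    ⟨walkWeight (⟨w0.bypass, w0.bypass_isPath⟩ : (UDG P).Path u v).val,
      Finset.mem_image_of_mem _ (Finset.mem_univ _)⟩
  have hm0mem := F.min'_mem hne
  obtain ⟨p0, -, hp0⟩ := Finset.mem_image.mp hm0mem
  have hm0 : ((k : ℝ) - 1) / 2 < F.min' hne := hp0 ▸ key p0.val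
  have hSne : {x : ℝ | ∃ w : (UDG P).Walk u v, walkWeight w = x}.Nonempty :=
    ⟨walkWeight w0, w0, rfl⟩
  have hlb : ∀ x ∈ {x : ℝ | ∃ w : (UDG P).Walk u v, walkWeight w = x}, F.min' hne ≤ x := by
    rintro x ⟨w, rfl⟩
    calc F.min' hne ≤ walkWeight w.bypass := by
          apply Finset.min'_le
          exact Finset.mem_image.mpr
            ⟨⟨w.bypass, w.bypass_isPath⟩, Finset.mem_univ _, rfl⟩
      _ ≤ walkWeight w := walkWeight_bypass_le w
  have : F.min' hne ≤ dG u v := le_csInf hSne hlb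
  linarith
end
end
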